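/- Let V be a finite type and r : V → V → Prop an acyclic relation (a DAG). If x ≠ y and x precedes y in every topological ordering of (V, r), then there is a directed path from x to y, i.e. Relation.TransGen r x y. -/

import Mathlib

/-!
If there is no path from `x` to `y`, then adding the edge `y → x` to the DAG creates no cycle:
its transitive closure is still a strict order. By Szpilrajn's theorem this order extends to a
topological ordering, which puts `y` before `x`, contradicting the hypothesis.
-/

open Relation

theorem exists_isStrictTotalOrder_extension {α : Type*} (s : α → α → Prop) [IsStrictOrder α s] :
    ∃ L : α → α → Prop, IsStrictTotalOrder α L ∧ s ≤ L := by
  let := partialOrderOfSO s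
  obtain ⟨le, hle, hext⟩ := extend_partialOrder ((· ≤ ·) : α → α → Prop)
  refine ⟨fun a b => le a b ∧ a ≠ b, ?_, fun a b h => ⟨hext _ _ (Or.inr h), ne_of_irrefl h⟩⟩
  refine { trichotomous := ?_, irrefl := fun a h => h.2 rfl, trans := ?_ }
  · intro a b hab hba
    by_contra hne
    rcases hle.total a b with h | h
    · exact hab ⟨h, hne⟩
    · exact hba ⟨h, Ne.symm hne⟩
  · rintro a b c ⟨hab, hne⟩ ⟨hbc, -⟩
    refine ⟨hle.trans _ _ _ hab hbc, ?_⟩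
    rintro rfl
    exact hne (hle.antisymm _ _ hab hbc)

namespace Relation

variable {α : Type*} (r : α → α → Prop) (x y : α)

/-- The transitive closure of `r` together with an extra edge `y → x`. -/
def TransGenAddEdge (a b : α) : Prop :=
  TransGen r a b ∨ (ReflTransGen r a y ∧ ReflTransGen r x b)

variable {r x y}

theorem TransGenAddEdge.trans {a b c : α} :
    TransGenAddEdge r x y a b → TransGenAddEdge r x y b c → TransGenAddEdge r x y a c := by
  rintro (hab | ⟨hay, hxb⟩) (hbc | ⟨hby, hxc⟩)
  · exact .inl (hab.trans hbc)
  · exact .inr ⟨hab.to_reflTransGen.trans hby, hxc⟩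
  · exact .inr ⟨hay, hxb.trans hbc.to_reflTransGen⟩
  · exact .inr ⟨hay, hxc⟩

theorem TransGenAddEdge.isStrictOrder (hacyc : ∀ a, ¬ TransGen r a a)
    (hxy : ¬ ReflTransGen r x y) : IsStrictOrder α (TransGenAddEdge r x y) where
  irrefl a := by
    rintro (haa | ⟨hay, hxa⟩)
    exacts [hacyc a haa, hxy (hxa.trans hay)]
  trans _ _ _ := TransGenAddEdge.trans

end Relation

theorem stmt_2_general {V : Type*} (r : V → V → Prop)
    (hacyc : ∀ x, ¬ Relation.TransGen r x x) (x y : V) (hxy : x ≠ y)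
    (hprec : ∀ L : V → V → Prop, IsStrictTotalOrder V L →
      (∀ a b, r a b → L a b) → L x y) :
    Relation.TransGen r x y := by
  by_contra hno_path
  have hno_refl_path : ¬ ReflTransGen r x y := by
    rw [reflTransGen_iff_eq_or_transGen]
    exact not_or_intro hxy.symm hno_path
  have := TransGenAddEdge.isStrictOrder hacyc hno_refl_path
  obtain ⟨L, hL, hext⟩ := exists_isStrictTotalOrder_extension (TransGenAddEdge r x y)
  have hLyx : L y x := hext _ _ (.inr ⟨.refl, .refl⟩)
  exact asymm (hprec L hL fun a b hab => hext _ _ (.inl (.single hab))) hLyx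

/-- If `V` is finite, `r` is acyclic, `x ≠ y` and `x` precedes `y` in every
topological ordering of `(V, r)`, then there is a directed path from `x` to `y`. -/
theorem stmt_2 {V : Type*} [Fintype V] (r : V → V → Prop)
    (hacyc : ∀ x, ¬ Relation.TransGen r x x) (x y : V) (hxy : x ≠ y)
    (hprec : ∀ L : V → V → Prop, IsStrictTotalOrder V L →
      (∀ a b, r a b → L a b) → L x y) :
    Relation.TransGen r x y :=
  stmt_2_general r hacyc x y hxy hprec
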